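/- arXiv:2505.11862 — 3 statements merged into one kernel-verified Lean document; each statement's English description precedes it below -/
import Mathlib

section
/- Stability of the policy update (Theorem 5.4, approximate policy improvement form): let π be a deterministic policy of a finite MDP with discount factor γ ∈ [0,1), let Q̃ : S × A → ℝ satisfy ‖Q̃ − Q^π‖∞ ≤ ε, and let π' be greedy with respect to Q̃ (i.e. Q̃(s, π'(s)) = max_{a∈A} Q̃(s,a) for every s). Then for every state s, V^{π'}(s) ≥ V^π(s) − 2ε/(1 − γ). -/
/-- The policy Bellman operator `(T_π V)(s) = r(s,π(s)) + γ ∑_{s'} P(s'|s,π(s)) V(s')`. -/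
noncomputable def bellmanPol {S A : Type*} [Fintype S] (P : S → A → S → ℝ)
    (r : S → A → ℝ) (γ : ℝ) (π : S → A) (V : S → ℝ) : S → ℝ :=
  fun s => r s (π s) + γ * ∑ s', P s (π s) s' * V s'

/-- The action-value function `Q(s,a) = r(s,a) + γ ∑_{s'} P(s'|s,a) V(s')`. -/
noncomputable def qFun {S A : Type*} [Fintype S] (P : S → A → S → ℝ)
    (r : S → A → ℝ) (γ : ℝ) (V : S → ℝ) (s : S) (a : A) : ℝ :=
  r s a + γ * ∑ s', P s a s' * V s'

/-!
Let `D = V^{π'} - V^π` and let `c` be any lower bound of `D`. Greedy choice with respect to an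
`ε`-accurate `Q̃` loses at most `2ε` against `π`, so `Q^π(s, π'(s)) ≥ V^π(s) - 2ε`; one application
of `T_{π'}` then gives `D ≥ γ c - 2ε`. Taking `c = min D` yields `(1 - γ) min D ≥ -2ε`.
-/

theorem neg_div_one_sub_le_of_forall_lowerBound {ι : Type*} [Finite ι] [Nonempty ι]
    {D : ι → ℝ} {γ k : ℝ} (hγ : γ < 1)
    (h : ∀ c, (∀ i, c ≤ D i) → ∀ i, γ * c - k ≤ D i) (i : ι) :
    -(k / (1 - γ)) ≤ D i := by
  obtain ⟨i₀, hi₀⟩ := Finite.exists_min D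
  have hfix : γ * D i₀ - k ≤ D i₀ := h (D i₀) hi₀ i₀
  have hmin : -(k / (1 - γ)) ≤ D i₀ := by
    rw [← neg_div, div_le_iff₀ (by linarith)]
    linarith
  exact hmin.trans (hi₀ i)

theorem le_sum_mul_of_forall_le {ι : Type*} {s : Finset ι} {p W : ι → ℝ} {c : ℝ}
    (hp0 : ∀ i ∈ s, 0 ≤ p i) (hp1 : ∑ i ∈ s, p i = 1) (hW : ∀ i ∈ s, c ≤ W i) :
    c ≤ ∑ i ∈ s, p i * W i :=
  calc c = ∑ i ∈ s, p i * c := by rw [← Finset.sum_mul, hp1, one_mul]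
    _ ≤ ∑ i ∈ s, p i * W i :=
      Finset.sum_le_sum fun i hi => mul_le_mul_of_nonneg_left (hW i hi) (hp0 i hi)

theorem sub_two_mul_le_of_abs_sub_le_of_forall_le {α : Type*} {f g : α → ℝ} {ε : ℝ}
    (hfg : ∀ a, |f a - g a| ≤ ε) {b : α} (hb : ∀ a, f a ≤ f b) (a : α) :
    g a - 2 * ε ≤ g b := by
  have ha := abs_le.mp (hfg a)
  have hb' := abs_le.mp (hfg b)
  linarith [hb a]

theorem qFun_add_mul_le_qFun {S A : Type*} [Fintype S] {P : S → A → S → ℝ}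
    (hP0 : ∀ s a s', 0 ≤ P s a s') (hP1 : ∀ s a, ∑ s', P s a s' = 1)
    (r : S → A → ℝ) {γ : ℝ} (hγ : 0 ≤ γ) {V W : S → ℝ} {c : ℝ} (hVW : ∀ s, c ≤ W s - V s)
    (s : S) (a : A) :
    qFun P r γ V s a + γ * c ≤ qFun P r γ W s a := by
  have hshift : c ≤ ∑ s', P s a s' * (W s' - V s') :=
    le_sum_mul_of_forall_le (fun s' _ => hP0 s a s') (hP1 s a) (fun s' _ => hVW s')
  have hdiff : qFun P r γ W s a - qFun P r γ V s a = γ * ∑ s', P s a s' * (W s' - V s') := by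
    simp only [qFun, mul_sub, Finset.sum_sub_distrib]
    ring
  nlinarith

theorem policy_update_stability_general
    {S A : Type*} [Fintype S] [Fintype A] [Nonempty A]
    (P : S → A → S → ℝ)
    (hP0 : ∀ s a s', 0 ≤ P s a s')
    (hP1 : ∀ s a, ∑ s', P s a s' = 1)
    (r : S → A → ℝ) (γ : ℝ) (hγ0 : 0 ≤ γ) (hγ1 : γ < 1)
    (π π' : S → A) (Vpi Vpi' : S → ℝ)
    (hVpi : ∀ s, Vpi s = bellmanPol P r γ π Vpi s)
    (hVpi' : ∀ s, Vpi' s = bellmanPol P r γ π' Vpi' s)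
    (Qt : S → A → ℝ) (ε : ℝ)
    (hQt : ‖(fun p : S × A => Qt p.1 p.2) - (fun p : S × A => qFun P r γ Vpi p.1 p.2)‖ ≤ ε)
    (hgreedy : ∀ s, Qt s (π' s) = Finset.univ.sup' Finset.univ_nonempty (fun a => Qt s a)) :
    ∀ s, Vpi' s ≥ Vpi s - 2 * ε / (1 - γ) := by
  intro s
  have : Nonempty S := ⟨s⟩
  have hclose : ∀ t a, |Qt t a - qFun P r γ Vpi t a| ≤ ε := fun t a =>
    (norm_le_pi_norm (_ : S × A → ℝ) (t, a)).trans hQt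
  have hmax : ∀ t a, Qt t a ≤ Qt t (π' t) := fun t a =>
    (hgreedy t).symm ▸ Finset.le_sup' (fun a => Qt t a) (Finset.mem_univ a)
  have hstep : ∀ c, (∀ t, c ≤ Vpi' t - Vpi t) → ∀ t, γ * c - 2 * ε ≤ Vpi' t - Vpi t := by
    intro c hc t
    have hgreedy_loss := sub_two_mul_le_of_abs_sub_le_of_forall_le (hclose t) (hmax t) (π t)
    have hshift := qFun_add_mul_le_qFun hP0 hP1 r hγ0 hc t (π' t)
    have hV : Vpi t = qFun P r γ Vpi t (π t) := hVpi t
    have hV' : Vpi' t = qFun P r γ Vpi' t (π' t) := hVpi' t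
    linarith
  have := neg_div_one_sub_le_of_forall_lowerBound hγ1 hstep s
  rw [ge_iff_le, sub_le_iff_le_add]
  linarith

/-- Stability of the policy update: if `‖Q̃ − Q^π‖∞ ≤ ε` and `π'` is greedy w.r.t. `Q̃`,
then `V^{π'}(s) ≥ V^π(s) − 2ε/(1 − γ)` for every state `s`. -/
theorem policy_update_stability
    {S A : Type*} [Fintype S] [Nonempty S] [Fintype A] [Nonempty A]
    (P : S → A → S → ℝ)
    (hP0 : ∀ s a s', 0 ≤ P s a s')
    (hP1 : ∀ s a, ∑ s', P s a s' = 1)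
    (r : S → A → ℝ) (γ : ℝ) (hγ0 : 0 ≤ γ) (hγ1 : γ < 1)
    (π π' : S → A) (Vpi Vpi' : S → ℝ)
    (hVpi : ∀ s, Vpi s = bellmanPol P r γ π Vpi s)
    (hVpi' : ∀ s, Vpi' s = bellmanPol P r γ π' Vpi' s)
    (Qt : S → A → ℝ) (ε : ℝ)
    (hQt : ‖(fun p : S × A => Qt p.1 p.2) - (fun p : S × A => qFun P r γ Vpi p.1 p.2)‖ ≤ ε)
    (hgreedy : ∀ s, Qt s (π' s) = Finset.univ.sup' Finset.univ_nonempty (fun a => Qt s a)) :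
    ∀ s, Vpi' s ≥ Vpi s - 2 * ε / (1 - γ) :=
  policy_update_stability_general P hP0 hP1 r γ hγ0 hγ1 π π' Vpi Vpi' hVpi hVpi' Qt ε hQt hgreedy
end

section
/- One-step error propagation in approximate policy iteration (Step 2 of the convergence proof): let π and π' be deterministic policies of a finite MDP with discount factor γ ∈ [0,1), and suppose ‖T_{π'} V^π − T V^π‖∞ ≤ c. Then (1 − γ) ‖V* − V^{π'}‖∞ ≤ 2γ ‖V* − V^π‖∞ + c, where V* is the unique fixed point of the optimal Bellman operator T. -/
/-- The optimal Bellman operator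
`(T V)(s) = max_{a∈A} [ r(s,a) + γ ∑_{s'} P(s'|s,a) V(s') ]`. -/
noncomputable def bellmanOpt {S A : Type*} [Fintype S] [Fintype A] [Nonempty A]
    (P : S → A → S → ℝ) (r : S → A → ℝ) (γ : ℝ) (V : S → ℝ) : S → ℝ :=
  fun s => Finset.univ.sup' Finset.univ_nonempty
    (fun a => r s a + γ * ∑ s', P s a s' * V s')

/-!
Write `Q_V(s,a) = r(s,a) + γ ∑_{s'} P(s'|s,a) V(s')`. Since `P(·|s,a)` is a probability vector,
`V ↦ Q_V(s,a)` is `γ`-Lipschitz for the sup norm, and so are `T_π V = Q_V(·,π(·))` and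
`T V = max_a Q_V(·,a)`. Splitting
`V* − V^{π'} = (T V* − T V^π) + (T V^π − T_{π'} V^π) + (T_{π'} V^π − T_{π'} V^{π'})`
gives `‖V* − V^{π'}‖ ≤ γ ‖V* − V^π‖ + c + γ (‖V^π − V*‖ + ‖V* − V^{π'}‖)`.
-/

open Finset

lemma Finset.abs_sup'_sub_sup'_le {ι α : Type*} [AddCommGroup α] [LinearOrder α]
    [IsOrderedAddMonoid α] {s : Finset ι} (hs : s.Nonempty) {f g : ι → α} {M : α}
    (hfg : ∀ i ∈ s, |f i - g i| ≤ M) : |s.sup' hs f - s.sup' hs g| ≤ M := by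
  have le_add : ∀ f g : ι → α, (∀ i ∈ s, |f i - g i| ≤ M) →
      s.sup' hs f ≤ s.sup' hs g + M :=
    fun f g hfg => sup'_le hs f fun i hi =>
      calc f i ≤ g i + M := sub_le_iff_le_add'.mp (le_of_abs_le (hfg i hi))
        _ ≤ s.sup' hs g + M := by gcongr; exact le_sup' g hi
  rw [abs_sub_le_iff, sub_le_iff_le_add', sub_le_iff_le_add']
  exact ⟨le_add f g hfg, le_add g f fun i hi => abs_sub_comm (f i) (g i) ▸ hfg i hi⟩

lemma abs_sum_mul_le_norm {S : Type*} [Fintype S] {p : S → ℝ} (hp0 : ∀ s, 0 ≤ p s)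
    (hp1 : ∑ s, p s = 1) (f : S → ℝ) : |∑ s, p s * f s| ≤ ‖f‖ :=
  calc |∑ s, p s * f s| ≤ ∑ s, |p s * f s| := abs_sum_le_sum_abs _ _
    _ ≤ ∑ s, p s * ‖f‖ := sum_le_sum fun s _ => by
        rw [abs_mul, abs_of_nonneg (hp0 s), ← Real.norm_eq_abs]
        exact mul_le_mul_of_nonneg_left (norm_le_pi_norm f s) (hp0 s)
    _ = ‖f‖ := by rw [← sum_mul, hp1, one_mul]

section Bellman

variable {S A : Type*} [Fintype S] (P : S → A → S → ℝ) (r : S → A → ℝ) (γ : ℝ)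

noncomputable def qValue (V : S → ℝ) (s : S) (a : A) : ℝ :=
  r s a + γ * ∑ s', P s a s' * V s'

lemma bellmanPol_apply (π : S → A) (V : S → ℝ) (s : S) :
    bellmanPol P r γ π V s = qValue P r γ V s (π s) := rfl

lemma bellmanOpt_apply [Fintype A] [Nonempty A] (V : S → ℝ) (s : S) :
    bellmanOpt P r γ V s = univ.sup' univ_nonempty (qValue P r γ V s) := rfl

variable {P γ}

lemma abs_qValue_sub_le (hP0 : ∀ s a s', 0 ≤ P s a s') (hP1 : ∀ s a, ∑ s', P s a s' = 1)
    (hγ : 0 ≤ γ) (U W : S → ℝ) (s : S) (a : A) :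
    |qValue P r γ U s a - qValue P r γ W s a| ≤ γ * ‖U - W‖ := by
  have hsub : qValue P r γ U s a - qValue P r γ W s a = γ * ∑ s', P s a s' * (U - W) s' := by
    simp only [qValue, Pi.sub_apply, mul_sub, sum_sub_distrib]
    ring
  rw [hsub, abs_mul, abs_of_nonneg hγ]
  exact mul_le_mul_of_nonneg_left (abs_sum_mul_le_norm (hP0 s a) (hP1 s a) _) hγ

lemma norm_bellmanPol_sub_le (hP0 : ∀ s a s', 0 ≤ P s a s')
    (hP1 : ∀ s a, ∑ s', P s a s' = 1) (hγ : 0 ≤ γ) (π : S → A) (U W : S → ℝ) :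
    ‖bellmanPol P r γ π U - bellmanPol P r γ π W‖ ≤ γ * ‖U - W‖ :=
  (pi_norm_le_iff_of_nonneg (by positivity)).mpr fun s => by
    rw [Pi.sub_apply, Real.norm_eq_abs, bellmanPol_apply, bellmanPol_apply]
    exact abs_qValue_sub_le r hP0 hP1 hγ U W s (π s)

lemma norm_bellmanOpt_sub_le [Fintype A] [Nonempty A] (hP0 : ∀ s a s', 0 ≤ P s a s')
    (hP1 : ∀ s a, ∑ s', P s a s' = 1) (hγ : 0 ≤ γ) (U W : S → ℝ) :
    ‖bellmanOpt P r γ U - bellmanOpt P r γ W‖ ≤ γ * ‖U - W‖ :=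
  (pi_norm_le_iff_of_nonneg (by positivity)).mpr fun s => by
    rw [Pi.sub_apply, Real.norm_eq_abs, bellmanOpt_apply, bellmanOpt_apply]
    exact abs_sup'_sub_sup'_le _ fun a _ => abs_qValue_sub_le r hP0 hP1 hγ U W s a

end Bellman

theorem api_one_step_error_general
    {S A : Type*} [Fintype S] [Fintype A] [Nonempty A]
    (P : S → A → S → ℝ)
    (hP0 : ∀ s a s', 0 ≤ P s a s')
    (hP1 : ∀ s a, ∑ s', P s a s' = 1)
    (r : S → A → ℝ) (γ : ℝ) (hγ0 : 0 ≤ γ)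
    (π' : S → A) (Vpi Vpi' Vstar : S → ℝ)
    (hVpi' : ∀ s, Vpi' s = bellmanPol P r γ π' Vpi' s)
    (hVstar : ∀ s, Vstar s = bellmanOpt P r γ Vstar s)
    (c : ℝ)
    (hc : ‖bellmanPol P r γ π' Vpi - bellmanOpt P r γ Vpi‖ ≤ c) :
    (1 - γ) * ‖Vstar - Vpi'‖ ≤ 2 * γ * ‖Vstar - Vpi‖ + c := by
  have hsplit : Vstar - Vpi' = (bellmanOpt P r γ Vstar - bellmanOpt P r γ Vpi) +
      (bellmanOpt P r γ Vpi - bellmanPol P r γ π' Vpi) +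
      (bellmanPol P r γ π' Vpi - bellmanPol P r γ π' Vpi') := by
    conv_lhs => rw [show Vstar = bellmanOpt P r γ Vstar from funext hVstar,
      show Vpi' = bellmanPol P r γ π' Vpi' from funext hVpi']
    abel
  have hopt := norm_bellmanOpt_sub_le r hP0 hP1 hγ0 Vstar Vpi
  have hpol := norm_bellmanPol_sub_le r hP0 hP1 hγ0 π' Vpi Vpi'
  have hgreedy : ‖bellmanOpt P r γ Vpi - bellmanPol P r γ π' Vpi‖ ≤ c :=
    (norm_sub_rev _ _).trans_le hc
  have htri : ‖Vpi - Vpi'‖ ≤ ‖Vstar - Vpi‖ + ‖Vstar - Vpi'‖ :=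
    norm_sub_rev Vpi Vstar ▸ norm_sub_le_norm_sub_add_norm_sub Vpi Vstar Vpi'
  have hdist : ‖Vstar - Vpi'‖ ≤ γ * ‖Vstar - Vpi‖ + c + γ * ‖Vpi - Vpi'‖ := by
    rw [hsplit]
    exact norm_add₃_le.trans (add_le_add_three hopt hgreedy hpol)
  linarith [mul_le_mul_of_nonneg_left htri hγ0]

/-- One-step error propagation in approximate policy iteration: if
`‖T_{π'} V^π − T V^π‖∞ ≤ c`, then
`(1 − γ) ‖V* − V^{π'}‖∞ ≤ 2γ ‖V* − V^π‖∞ + c`. -/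
theorem api_one_step_error
    {S A : Type*} [Fintype S] [Nonempty S] [Fintype A] [Nonempty A]
    (P : S → A → S → ℝ)
    (hP0 : ∀ s a s', 0 ≤ P s a s')
    (hP1 : ∀ s a, ∑ s', P s a s' = 1)
    (r : S → A → ℝ) (γ : ℝ) (hγ0 : 0 ≤ γ) (hγ1 : γ < 1)
    (π π' : S → A) (Vpi Vpi' Vstar : S → ℝ)
    (hVpi : ∀ s, Vpi s = bellmanPol P r γ π Vpi s)
    (hVpi' : ∀ s, Vpi' s = bellmanPol P r γ π' Vpi' s)
    (hVstar : ∀ s, Vstar s = bellmanOpt P r γ Vstar s)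
    (c : ℝ)
    (hc : ‖bellmanPol P r γ π' Vpi - bellmanOpt P r γ Vpi‖ ≤ c) :
    (1 - γ) * ‖Vstar - Vpi'‖ ≤ 2 * γ * ‖Vstar - Vpi‖ + c :=
  api_one_step_error_general P hP0 hP1 r γ hγ0 π' Vpi Vpi' Vstar hVpi' hVstar c hc
end

section
/- Policy iteration convergence with explicit iteration count (Theorem 5.3): consider a finite MDP with discount factor γ ∈ (0, 1/3), a sequence of deterministic policies π_0, π_1, …, π_K such that for each k < K there is Q̂^{π_k} : S × A → ℝ with ‖Q̂^{π_k} − Q^{π_k}‖∞ ≤ ε (ε > 0) and π_{k+1}(s) maximizes Q̂^{π_k}(s, ·) for every state s. Set Δ_0 = ‖V* − V^{π_0}‖∞ and suppose Δ_0 > 0. If K ≥ log(Δ_0 (1 − 3γ) / (2ε)) / log((1 − γ)/(2γ)), then ‖V* − V^{π_K}‖∞ ≤ 4ε/(1 − 3γ). -/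
/-!
Write `Δ_k = ‖V* - V^{π_k}‖`. Since `π_{k+1}` is greedy for an `ε`-accurate estimate of
`Q^{π_k}`, it is `2ε`-greedy for `Q^{π_k}` itself, and comparing `V* = T V*` with
`V^{π_{k+1}} = T_{π_{k+1}} V^{π_{k+1}}` through `T V^{π_k}` gives
`Δ_{k+1} ≤ 2γ Δ_k + 2ε + γ Δ_{k+1}`, i.e. `Δ_{k+1} ≤ β Δ_k + 2ε/(1-γ)` with `β = 2γ/(1-γ) < 1`.
Unrolling the recursion, `Δ_K ≤ β^K Δ_0 + 2ε/(1-3γ)`, and the assumption on `K` is exactly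
`β^K Δ_0 ≤ 2ε/(1-3γ)`.
-/

open Finset

section StochasticAverage

variable {S : Type*} [Fintype S] {p : S → ℝ}

lemma sum_mul_le_of_forall_le (hp0 : ∀ s, 0 ≤ p s) (hp1 : ∑ s, p s = 1) {U : S → ℝ} {c : ℝ}
    (hU : ∀ s, U s ≤ c) : ∑ s, p s * U s ≤ c :=
  calc ∑ s, p s * U s ≤ ∑ s, p s * c :=
        sum_le_sum fun s _ => mul_le_mul_of_nonneg_left (hU s) (hp0 s)
    _ = c := by rw [← sum_mul, hp1, one_mul]

lemma sum_mul_le_norm (hp0 : ∀ s, 0 ≤ p s) (hp1 : ∑ s, p s = 1) (U : S → ℝ) :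
    ∑ s, p s * U s ≤ ‖U‖ :=
  sum_mul_le_of_forall_le hp0 hp1 fun s => (le_abs_self _).trans (norm_le_pi_norm U s)

lemma nonpos_of_le_mul_sum_mul {q : S → S → ℝ} (hq0 : ∀ s s', 0 ≤ q s s')
    (hq1 : ∀ s, ∑ s', q s s' = 1) {γ : ℝ} (hγ0 : 0 ≤ γ) (hγ1 : γ < 1) {U : S → ℝ}
    (hU : ∀ s, U s ≤ γ * ∑ s', q s s' * U s') (s : S) : U s ≤ 0 := by
  have : Nonempty S := ⟨s⟩
  obtain ⟨s₀, hs₀⟩ := Finite.exists_max U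
  have hmax : U s₀ ≤ γ * U s₀ :=
    (hU s₀).trans (mul_le_mul_of_nonneg_left (sum_mul_le_of_forall_le (hq0 s₀) (hq1 s₀) hs₀) hγ0)
  nlinarith [hs₀ s]

end StochasticAverage

section Bellman

variable {S A : Type*} [Fintype S] {P : S → A → S → ℝ} {r : S → A → ℝ} {γ : ℝ}

lemma qFun_le_qFun_add (hP0 : ∀ s a s', 0 ≤ P s a s') (hP1 : ∀ s a, ∑ s', P s a s' = 1)
    (hγ0 : 0 ≤ γ) (V W : S → ℝ) (s : S) (a : A) :
    qFun P r γ V s a ≤ qFun P r γ W s a + γ * ‖V - W‖ := by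
  have h := sum_mul_le_norm (hP0 s a) (hP1 s a) (V - W)
  simp only [Pi.sub_apply, mul_sub, sum_sub_distrib] at h
  simp only [qFun]
  nlinarith

lemma bellmanOpt_le_bellmanOpt_add [Fintype A] [Nonempty A] (hP0 : ∀ s a s', 0 ≤ P s a s')
    (hP1 : ∀ s a, ∑ s', P s a s' = 1) (hγ0 : 0 ≤ γ) (V W : S → ℝ) (s : S) :
    bellmanOpt P r γ V s ≤ bellmanOpt P r γ W s + γ * ‖V - W‖ :=
  sup'_le _ _ fun a _ => (qFun_le_qFun_add hP0 hP1 hγ0 V W s a).trans <|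
    add_le_add_left (le_sup' (qFun P r γ W s) (mem_univ a)) _

lemma policy_value_le_optimal_value [Fintype A] [Nonempty A] (hP0 : ∀ s a s', 0 ≤ P s a s')
    (hP1 : ∀ s a, ∑ s', P s a s' = 1) (hγ0 : 0 ≤ γ) (hγ1 : γ < 1) {π : S → A} {V Vstar : S → ℝ}
    (hV : ∀ s, V s = bellmanPol P r γ π V s) (hVstar : ∀ s, Vstar s = bellmanOpt P r γ Vstar s)
    (s : S) : V s ≤ Vstar s := by
  suffices ∀ s, V s - Vstar s ≤ γ * ∑ s', P s (π s) s' * (V s' - Vstar s') by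
    linarith [nonpos_of_le_mul_sum_mul (fun s => hP0 s (π s)) (fun s => hP1 s (π s)) hγ0 hγ1 this s]
  intro s
  have hπ : qFun P r γ Vstar s (π s) ≤ Vstar s := (hVstar s).symm ▸ le_sup' _ (mem_univ (π s))
  rw [hV s]
  simp only [bellmanPol, qFun, mul_sub, sum_sub_distrib] at hπ ⊢
  linarith

lemma norm_optimal_sub_le_of_almost_greedy [Fintype A] [Nonempty A]
    (hP0 : ∀ s a s', 0 ≤ P s a s') (hP1 : ∀ s a, ∑ s', P s a s' = 1) (hγ0 : 0 ≤ γ) (hγ1 : γ < 1)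
    {π' : S → A} {V V' Vstar : S → ℝ} {δ : ℝ} (hδ : 0 ≤ δ)
    (hV' : ∀ s, V' s = bellmanPol P r γ π' V' s) (hVstar : ∀ s, Vstar s = bellmanOpt P r γ Vstar s)
    (hgreedy : ∀ s a, qFun P r γ V s a ≤ qFun P r γ V s (π' s) + δ) :
    ‖Vstar - V'‖ ≤ 2 * γ / (1 - γ) * ‖Vstar - V‖ + δ / (1 - γ) := by
  have hV'V : ‖V - V'‖ ≤ ‖Vstar - V‖ + ‖Vstar - V'‖ := by
    rw [norm_sub_rev Vstar V]; exact norm_sub_le_norm_sub_add_norm_sub V Vstar V'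
  have hpoint : ∀ s, Vstar s - V' s ≤ 2 * γ * ‖Vstar - V‖ + δ + γ * ‖Vstar - V'‖ := fun s =>
    calc Vstar s - V' s
        ≤ bellmanOpt P r γ V s + γ * ‖Vstar - V‖ - V' s := by
          rw [hVstar s]; gcongr; exact bellmanOpt_le_bellmanOpt_add hP0 hP1 hγ0 Vstar V s
      _ ≤ qFun P r γ V s (π' s) + δ + γ * ‖Vstar - V‖ - V' s := by
          gcongr; exact sup'_le _ _ fun a _ => hgreedy s a
      _ ≤ qFun P r γ V' s (π' s) + γ * ‖V - V'‖ + δ + γ * ‖Vstar - V‖ - V' s := by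
          gcongr; exact qFun_le_qFun_add hP0 hP1 hγ0 V V' s (π' s)
      _ = γ * ‖V - V'‖ + δ + γ * ‖Vstar - V‖ := by rw [hV' s]; simp only [bellmanPol, qFun]; ring
      _ ≤ 2 * γ * ‖Vstar - V‖ + δ + γ * ‖Vstar - V'‖ := by nlinarith
  have hnorm : ‖Vstar - V'‖ ≤ 2 * γ * ‖Vstar - V‖ + δ + γ * ‖Vstar - V'‖ := by
    refine (pi_norm_le_iff_of_nonneg (by positivity)).2 fun s => ?_
    rw [Pi.sub_apply, Real.norm_eq_abs,
      abs_of_nonneg (sub_nonneg.2 (policy_value_le_optimal_value hP0 hP1 hγ0 hγ1 hV' hVstar s))]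
    exact hpoint s
  rw [div_mul_eq_mul_div, ← add_div, le_div_iff₀ (by linarith)]
  linarith

end Bellman

-- `c / (1 - β)` is the fixed point of `y ↦ β * y + c`.
lemma sub_le_pow_mul_sub_of_le_mul_add {x : ℕ → ℝ} {β c : ℝ} {K : ℕ} (hβ0 : 0 ≤ β) (hβ1 : β ≠ 1)
    (h : ∀ k < K, x (k + 1) ≤ β * x k + c) :
    ∀ k ≤ K, x k - c / (1 - β) ≤ β ^ k * (x 0 - c / (1 - β)) := by
  have hfix : β * (c / (1 - β)) + c = c / (1 - β) := by
    field_simp [sub_ne_zero.2 hβ1.symm]; ring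
  intro k
  induction k with
  | zero => simp
  | succ k ih =>
    intro hk
    calc x (k + 1) - c / (1 - β) ≤ β * (x k - c / (1 - β)) := by linarith [h k hk]
      _ ≤ β * (β ^ k * (x 0 - c / (1 - β))) := mul_le_mul_of_nonneg_left (ih (by omega)) hβ0
      _ = β ^ (k + 1) * (x 0 - c / (1 - β)) := by ring

lemma pow_mul_le_of_log_div_le {β x E : ℝ} {K : ℕ} (hβ0 : 0 < β) (hβ1 : β < 1) (hx : 0 ≤ x)
    (hE : 0 < E) (hK : Real.log (x / E) / Real.log β⁻¹ ≤ K) : β ^ K * x ≤ E := by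
  rcases hx.eq_or_lt with rfl | hx
  · simpa using hE.le
  have hlog : 0 < Real.log β⁻¹ := Real.log_pos ((one_lt_inv₀ hβ0).2 hβ1)
  have hlog_le : Real.log (x / E) ≤ Real.log (β⁻¹ ^ K) := by
    rw [Real.log_pow]; exact (div_le_iff₀ hlog).1 hK
  have hle : x / E ≤ β⁻¹ ^ K := (Real.log_le_log_iff (by positivity) (by positivity)).1 hlog_le
  rw [inv_pow, div_le_iff₀ hE] at hle
  calc β ^ K * x ≤ β ^ K * ((β ^ K)⁻¹ * E) := by gcongr
    _ = E := by field_simp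

theorem policy_iteration_iteration_count_general
    {S A : Type*} [Fintype S] [Fintype A] [Nonempty A]
    (P : S → A → S → ℝ)
    (hP0 : ∀ s a s', 0 ≤ P s a s')
    (hP1 : ∀ s a, ∑ s', P s a s' = 1)
    (r : S → A → ℝ) (γ : ℝ) (hγ0 : 0 < γ) (hγ : γ < 1 / 3)
    (ε : ℝ) (hε : 0 < ε) (K : ℕ)
    (π : ℕ → S → A) (Vpi : ℕ → S → ℝ) (Vstar : S → ℝ)
    (hVpi : ∀ k s, Vpi k s = bellmanPol P r γ (π k) (Vpi k) s)
    (hVstar : ∀ s, Vstar s = bellmanOpt P r γ Vstar s)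
    (himp : ∀ k < K, ∃ Qh : S → A → ℝ,
      ‖(fun p : S × A => Qh p.1 p.2) -
        (fun p : S × A => qFun P r γ (Vpi k) p.1 p.2)‖ ≤ ε ∧
      ∀ s, Qh s (π (k + 1) s) = Finset.univ.sup' Finset.univ_nonempty (fun a => Qh s a))
    (hK : (K : ℝ) ≥
      Real.log (‖Vstar - Vpi 0‖ * (1 - 3 * γ) / (2 * ε)) / Real.log ((1 - γ) / (2 * γ))) :
    ‖Vstar - Vpi K‖ ≤ 4 * ε / (1 - 3 * γ) := by
  set Δ : ℕ → ℝ := fun k => ‖Vstar - Vpi k‖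
  have h1γ : 0 < 1 - γ := by linarith
  have h3γ : 0 < 1 - 3 * γ := by linarith
  have hβ1 : 2 * γ / (1 - γ) < 1 := by rw [div_lt_one h1γ]; linarith
  have hE : 2 * ε / (1 - γ) / (1 - 2 * γ / (1 - γ)) = 2 * ε / (1 - 3 * γ) := by
    field_simp; ring
  have hstep : ∀ k < K, Δ (k + 1) ≤ 2 * γ / (1 - γ) * Δ k + 2 * ε / (1 - γ) := by
    intro k hk
    obtain ⟨Qh, hQh, hmax⟩ := himp k hk
    refine norm_optimal_sub_le_of_almost_greedy hP0 hP1 hγ0.le (by linarith) (by positivity)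
      (hVpi (k + 1)) hVstar fun s a => ?_
    have hQ (b : A) : |Qh s b - qFun P r γ (Vpi k) s b| ≤ ε := (norm_le_pi_norm _ (s, b)).trans hQh
    have hb : Qh s a ≤ Qh s (π (k + 1) s) := (hmax s).symm ▸ le_sup' (Qh s) (mem_univ a)
    linarith [(abs_le.1 (hQ a)).1, (abs_le.1 (hQ (π (k + 1) s))).2]
  have hrec := sub_le_pow_mul_sub_of_le_mul_add (by positivity) hβ1.ne hstep K le_rfl
  have hpow : (2 * γ / (1 - γ)) ^ K * Δ 0 ≤ 2 * ε / (1 - 3 * γ) :=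
    pow_mul_le_of_log_div_le (by positivity) hβ1 (norm_nonneg _) (by positivity)
      (by rwa [inv_div, div_div_eq_mul_div])
  have hβE : 0 ≤ (2 * γ / (1 - γ)) ^ K * (2 * ε / (1 - 3 * γ)) := by positivity
  rw [hE] at hrec
  calc Δ K ≤ 2 * (2 * ε / (1 - 3 * γ)) := by nlinarith
    _ = 4 * ε / (1 - 3 * γ) := by ring

/-- Policy iteration convergence with explicit iteration count: for `γ ∈ (0,1/3)`,
`ε > 0`, `Δ_0 = ‖V* − V^{π_0}‖∞ > 0`, and
`K ≥ log(Δ_0 (1 − 3γ)/(2ε)) / log((1 − γ)/(2γ))`, the final policy satisfies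
`‖V* − V^{π_K}‖∞ ≤ 4ε/(1 − 3γ)`. -/
theorem policy_iteration_iteration_count
    {S A : Type*} [Fintype S] [Nonempty S] [Fintype A] [Nonempty A]
    (P : S → A → S → ℝ)
    (hP0 : ∀ s a s', 0 ≤ P s a s')
    (hP1 : ∀ s a, ∑ s', P s a s' = 1)
    (r : S → A → ℝ) (γ : ℝ) (hγ0 : 0 < γ) (hγ : γ < 1 / 3)
    (ε : ℝ) (hε : 0 < ε) (K : ℕ)
    (π : ℕ → S → A) (Vpi : ℕ → S → ℝ) (Vstar : S → ℝ)
    (hVpi : ∀ k s, Vpi k s = bellmanPol P r γ (π k) (Vpi k) s)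
    (hVstar : ∀ s, Vstar s = bellmanOpt P r γ Vstar s)
    (himp : ∀ k < K, ∃ Qh : S → A → ℝ,
      ‖(fun p : S × A => Qh p.1 p.2) -
        (fun p : S × A => qFun P r γ (Vpi k) p.1 p.2)‖ ≤ ε ∧
      ∀ s, Qh s (π (k + 1) s) = Finset.univ.sup' Finset.univ_nonempty (fun a => Qh s a))
    (hΔ0 : 0 < ‖Vstar - Vpi 0‖)
    (hK : (K : ℝ) ≥
      Real.log (‖Vstar - Vpi 0‖ * (1 - 3 * γ) / (2 * ε)) / Real.log ((1 - γ) / (2 * γ))) :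
    ‖Vstar - Vpi K‖ ≤ 4 * ε / (1 - 3 * γ) :=
  policy_iteration_iteration_count_general P hP0 hP1 r γ hγ0 hγ ε hε K π Vpi Vstar hVpi hVstar himp
    hK
end
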